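/- arXiv:1604.04771 — 2 statements merged into one kernel-verified Lean document; each statement's English description precedes it below -/
import Mathlib

section
/- Let n ≥ 2 and let O be the orbifold on ℂP¹ with ν(0) = n, ν(∞) = n, and ν(z) = 1 for all other z. A non-constant rational function A is a minimal holomorphic map A: O → O between orbifolds if and only if A(z) = z^r·R(z)^n for some rational function R ∈ ℂ(z) and some integer r with 1 ≤ r ≤ n−1 and gcd(r,n) = 1. -/
open Polynomial OnePoint
open scoped Classical

noncomputable section

/-- The Riemann sphere, modeled as the one-point compactification of `ℂ`. -/
abbrev CP1 := OnePoint ℂ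

namespace Pk

/-- The degree of a rational function. -/
def deg (f : RatFunc ℂ) : ℕ := max f.num.natDegree f.denom.natDegree

/-- Composition `f ∘ g` of rational functions. -/
def comp (f g : RatFunc ℂ) : RatFunc ℂ :=
  RatFunc.eval (algebraMap ℂ (RatFunc ℂ)) g f

/-- The `k`-th iterate `f^{∘k}` of a rational function (with `f^{∘0} = z`). -/
def iter (f : RatFunc ℂ) : ℕ → RatFunc ℂ
  | 0 => RatFunc.X
  | k + 1 => comp f (iter f k)

/-- The value of a rational function at the point at infinity. -/
def evalInf (f : RatFunc ℂ) : CP1 :=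
  if f.denom.natDegree < f.num.natDegree then ∞
  else OnePoint.some (if f.num.natDegree = f.denom.natDegree
    then f.num.leadingCoeff / f.denom.leadingCoeff else 0)

/-- The self-map of the Riemann sphere induced by a rational function. -/
def fmap (f : RatFunc ℂ) : CP1 → CP1 := fun p =>
  match p with
  | ∞ => evalInf f
  | OnePoint.some z =>
      if f.denom.eval z = 0 then ∞
      else OnePoint.some (f.num.eval z / f.denom.eval z)

/-- The local degree (multiplicity) of a rational function at a finite point. -/
def locDegFin (f : RatFunc ℂ) (a : ℂ) : ℕ :=
  if f.denom.eval a = 0 then f.denom.rootMultiplicity a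
  else (f.num - Polynomial.C (f.num.eval a / f.denom.eval a) * f.denom).rootMultiplicity a

/-- The local degree (multiplicity) `deg_z f` of a rational function at a point of `ℂP¹`. -/
def locDeg (f : RatFunc ℂ) : CP1 → ℕ := fun p =>
  match p with
  | ∞ => locDegFin (comp (RatFunc.X)⁻¹ (comp f (RatFunc.X)⁻¹)) 0
  | OnePoint.some z => locDegFin f z

/-- A ramification function on `ℂP¹` defining an orbifold: it is everywhere positive and
takes the value `1` outside a finite set. -/
def IsOrbifoldRam (ν : CP1 → ℕ) : Prop := (∀ z, 1 ≤ ν z) ∧ {z | ν z ≠ 1}.Finite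

/-- An orbifold on the Riemann sphere. -/
structure Orbifold where
  nu : CP1 → ℕ
  one_le : ∀ z, 1 ≤ nu z
  finite : {z | nu z ≠ 1}.Finite

/-- The Euler characteristic `χ` of an orbifold given by a ramification function,
`χ(O) = 2 + ∑ (1/ν(z) - 1)`. -/
def chiNu (ν : CP1 → ℕ) : ℚ :=
  if h : {z | ν z ≠ 1}.Finite then 2 + ∑ z ∈ h.toFinset, ((ν z : ℚ)⁻¹ - 1) else 0

/-- The collection (multiset) `ν(O)` of ramification indices of an orbifold. -/
def ramNu (ν : CP1 → ℕ) : Multiset ℕ :=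
  if h : {z | ν z ≠ 1}.Finite then h.toFinset.val.map ν else 0

/-- `f : O₁ → O₂` is a covering map between orbifolds: `ν₂(f(z)) = ν₁(z)·deg_z f`. -/
def IsCoveringBetween (f : RatFunc ℂ) (ν₁ ν₂ : CP1 → ℕ) : Prop :=
  ∀ z, ν₂ (fmap f z) = ν₁ z * locDeg f z

/-- `f : O₁ → O₂` is a holomorphic map between orbifolds: `ν₂(f(z)) ∣ ν₁(z)·deg_z f`. -/
def IsHoloBetween (f : RatFunc ℂ) (ν₁ ν₂ : CP1 → ℕ) : Prop :=
  ∀ z, ν₂ (fmap f z) ∣ ν₁ z * locDeg f z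

/-- `f : O₁ → O₂` is a minimal holomorphic map between orbifolds:
`ν₂(f(z)) = ν₁(z)·gcd(deg_z f, ν₂(f(z)))`. -/
def IsMinHoloBetween (f : RatFunc ℂ) (ν₁ ν₂ : CP1 → ℕ) : Prop :=
  ∀ z, ν₂ (fmap f z) = ν₁ z * Nat.gcd (locDeg f z) (ν₂ (fmap f z))

/-- The ramification function `ν₂^f` of the orbifold `O₂^f`: the lcm of the local degrees
of `f` over the fiber `f⁻¹(z)`. -/
def nu2 (f : RatFunc ℂ) (z : CP1) : ℕ :=
  if h : (fmap f ⁻¹' {z}).Finite then h.toFinset.lcm (locDeg f) else 1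

/-- The ramification function of the pullback orbifold `f*O`. -/
def pullNu (f : RatFunc ℂ) (ν : CP1 → ℕ) (z : CP1) : ℕ :=
  ν (fmap f z) / Nat.gcd (locDeg f z) (ν (fmap f z))

/-- A Möbius transformation is a rational function of degree one. -/
def IsMobius (μ : RatFunc ℂ) : Prop := deg μ = 1

/-- `μ` and `μ'` are mutually inverse Möbius transformations. -/
def MobiusInv (μ μ' : RatFunc ℂ) : Prop :=
  IsMobius μ ∧ IsMobius μ' ∧ comp μ μ' = RatFunc.X ∧ comp μ' μ = RatFunc.X

/-- `f` is conjugate to `g`: `f = μ∘g∘μ⁻¹` for a Möbius transformation `μ`. -/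
def IsConjTo (f g : RatFunc ℂ) : Prop :=
  ∃ μ μ', MobiusInv μ μ' ∧ f = comp (comp μ g) μ'

/-- `f` is μ-equivalent to `g`: `f = μ₁∘g∘μ₂` for Möbius transformations `μ₁, μ₂`. -/
def MuEquiv (f g : RatFunc ℂ) : Prop :=
  ∃ μ₁ μ₂, IsMobius μ₁ ∧ IsMobius μ₂ ∧ f = comp (comp μ₁ g) μ₂

/-- The power function `z^n`, `n ∈ ℤ`, as a rational function. -/
def zPow (n : ℤ) : RatFunc ℂ := RatFunc.X ^ n

/-- The degree-`n` Chebyshev polynomial `T_n` as a rational function. -/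
def cheb (n : ℕ) : RatFunc ℂ :=
  algebraMap (Polynomial ℂ) (RatFunc ℂ) (Polynomial.Chebyshev.T ℂ n)

/-- The rational function `½(z^n + z^{-n})`. -/
def half (n : ℕ) : RatFunc ℂ :=
  RatFunc.C (2 : ℂ)⁻¹ * (RatFunc.X ^ (n : ℤ) + RatFunc.X ^ (-(n : ℤ)))

/-- `f` is conjugate to `z^n` or to `z^{-n}`. -/
def ConjZPow (f : RatFunc ℂ) (n : ℕ) : Prop :=
  IsConjTo f (zPow n) ∨ IsConjTo f (zPow (-(n : ℤ)))

/-- `f` is conjugate to `T_n` or to `-T_n`. -/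
def ConjChebPM (f : RatFunc ℂ) (n : ℕ) : Prop :=
  IsConjTo f (cheb n) ∨ IsConjTo f (-(cheb n))

/-- A Lattès function: a rational function of degree at least two which is a covering
self-map `O → O` for some orbifold `O` on `ℂP¹`. -/
def IsLattes (f : RatFunc ℂ) : Prop :=
  2 ≤ deg f ∧ ∃ ν : CP1 → ℕ, IsOrbifoldRam ν ∧ IsCoveringBetween f ν ν

/-- A special rational function: a Lattès function, or a function conjugate to `z^{±n}`
or to `±T_n`. -/
def IsSpecial (f : RatFunc ℂ) : Prop :=
  IsLattes f ∨ ∃ n : ℕ, 2 ≤ n ∧ (ConjZPow f n ∨ ConjChebPM f n)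

/-- `C` and `B` have no common compositional right factor of degree greater than one. -/
def NoCommonRightFactor (C B : RatFunc ℂ) : Prop :=
  ∀ W p q : RatFunc ℂ, 2 ≤ deg W → C = comp p W → B = comp q W → False

/-- The bivariate polynomial whose zero set is the curve `A(x) - D(y) = 0`. -/
def curvePoly (A D : RatFunc ℂ) : MvPolynomial (Fin 2) ℂ :=
  Polynomial.aeval (MvPolynomial.X 0) A.num * Polynomial.aeval (MvPolynomial.X 1) D.denom -
    Polynomial.aeval (MvPolynomial.X 1) D.num * Polynomial.aeval (MvPolynomial.X 0) A.denom

/-- `A, C, D, B` form a good solution of `A∘C = D∘B`: all have degree at least two, the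
equation holds, the curve `A(x) - D(y) = 0` is irreducible, and `C, B` have no common
compositional right factor of degree greater than one. -/
def GoodSolution (A C D B : RatFunc ℂ) : Prop :=
  2 ≤ deg A ∧ 2 ≤ deg C ∧ 2 ≤ deg D ∧ 2 ≤ deg B ∧
    comp A C = comp D B ∧ Irreducible (curvePoly A D) ∧ NoCommonRightFactor C B

/-- A chain of length `s ≥ 2` and degree `d`: sequences `U_i, V_i` (`0 ≤ i < s`) of rational
functions of degree at least two with `U_i∘V_i = V_{i+1}∘U_{i+1}` and `deg (U_i∘V_i) = d`. -/
structure Chain (s d : ℕ) where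
  U : ℕ → RatFunc ℂ
  V : ℕ → RatFunc ℂ
  two_le_len : 2 ≤ s
  degU : ∀ i < s, 2 ≤ deg (U i)
  degV : ∀ i < s, 2 ≤ deg (V i)
  degF : ∀ i < s, deg (comp (U i) (V i)) = d
  eqs : ∀ i, i + 1 < s → comp (U i) (V i) = comp (V (i + 1)) (U (i + 1))

/-- The basis `F = V₁∘U₁` of a chain. -/
def Chain.basis {s d : ℕ} (c : Chain s d) : RatFunc ℂ := comp (c.V 0) (c.U 0)

/-- A good chain: each of its equalities is a good solution of `A∘C = D∘B`. -/
def Chain.IsGood {s d : ℕ} (c : Chain s d) : Prop :=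
  ∀ i, i + 1 < s → GoodSolution (c.U i) (c.V i) (c.V (i + 1)) (c.U (i + 1))

/-- A stable chain: a good chain with `ν(O₂^{U_1}) = ⋯ = ν(O₂^{U_s})` and
`ν(O₂^{V_1}) = ⋯ = ν(O₂^{V_s})`. -/
def Chain.IsStable {s d : ℕ} (c : Chain s d) : Prop :=
  c.IsGood ∧ (∀ i < s, ramNu (nu2 (c.U i)) = ramNu (nu2 (c.U 0))) ∧
    (∀ i < s, ramNu (nu2 (c.V i)) = ramNu (nu2 (c.V 0)))

/-- An elementary transformation: `f = U∘V ↦ g = V∘U`. -/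
def ElemTrans (f g : RatFunc ℂ) : Prop :=
  ∃ u v : RatFunc ℂ, 1 ≤ deg u ∧ 1 ≤ deg v ∧ f = comp u v ∧ g = comp v u

/-- The equivalence `f ∼ g`: a finite chain of elementary transformations from `f` to `g`. -/
def SimRel : RatFunc ℂ → RatFunc ℂ → Prop := Relation.ReflTransGen ElemTrans

/-- The function `θ(d)` equal to `log₂(84(d-4))` for `d > 4` and to `1` for `d ≤ 4`. -/
def thetaFn (d : ℕ) : ℝ := if 4 < d then Real.logb 2 (84 * ((d : ℝ) - 4)) else 1

end Pk

/-!
A nonzero rational function `A` sends `z ∈ ℂP¹` to `0` or `∞` exactly when its order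
`ord A z` is nonzero, and then its local degree at `z` is `|ord A z|`. Hence `A : O → O` is
minimal iff `ord A z` is coprime to `n` at `z = 0, ∞` and divisible by `n` at every other
point. If `r ≡ ord A 0 (mod n)`, all orders of `A / z^r` are then divisible by `n`, and since
`ℂ` is algebraically closed, `A / z^r` is an `n`-th power. Conversely, the orders of
`z^r R^n` are `±r + n · ord R z` at `0, ∞` and `n · ord R z` elsewhere.
-/

namespace Pk

open RatFunc

def ordAt (a : ℂ) (f : RatFunc ℂ) : ℤ :=
  (f.num.rootMultiplicity a : ℤ) - f.denom.rootMultiplicity a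

@[simp] theorem ordAt_zero (a : ℂ) : ordAt a 0 = 0 := by
  simp [ordAt]

theorem ne_zero_of_ordAt_ne_zero {a : ℂ} {f : RatFunc ℂ} (h : ordAt a f ≠ 0) : f ≠ 0 := by
  rintro rfl
  exact h (ordAt_zero a)

theorem ordAt_algebraMap (a : ℂ) (p : ℂ[X]) :
    ordAt a (algebraMap ℂ[X] (RatFunc ℂ) p) = p.rootMultiplicity a := by
  simp [ordAt]

theorem ordAt_div_algebraMap (a : ℂ) {p q : ℂ[X]} (hp : p ≠ 0) (hq : q ≠ 0) :
    ordAt a (algebraMap ℂ[X] (RatFunc ℂ) p / algebraMap ℂ[X] (RatFunc ℂ) q) =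
      (p.rootMultiplicity a : ℤ) - q.rootMultiplicity a := by
  set f := algebraMap ℂ[X] (RatFunc ℂ) p / algebraMap ℂ[X] (RatFunc ℂ) q
  have hf : f ≠ 0 := div_ne_zero (algebraMap_ne_zero hp) (algebraMap_ne_zero hq)
  have h := congrArg (rootMultiplicity a)
    ((num_mul_eq_mul_denom_iff hq).2 rfl : f.num * q = p * f.denom)
  rw [rootMultiplicity_mul (mul_ne_zero (num_ne_zero hf) hq),
    rootMultiplicity_mul (mul_ne_zero hp (denom_ne_zero f))] at h
  unfold ordAt
  omega

theorem ordAt_mul (a : ℂ) {f g : RatFunc ℂ} (hf : f ≠ 0) (hg : g ≠ 0) :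
    ordAt a (f * g) = ordAt a f + ordAt a g := by
  rw [← num_div_denom f, ← num_div_denom g, div_mul_div_comm, ← map_mul, ← map_mul,
    ordAt_div_algebraMap a (mul_ne_zero (num_ne_zero hf) (num_ne_zero hg))
      (mul_ne_zero (denom_ne_zero f) (denom_ne_zero g)),
    rootMultiplicity_mul (mul_ne_zero (num_ne_zero hf) (num_ne_zero hg)),
    rootMultiplicity_mul (mul_ne_zero (denom_ne_zero f) (denom_ne_zero g)),
    num_div_denom, num_div_denom]
  unfold ordAt
  push_cast
  ring

theorem ordAt_inv (a : ℂ) (f : RatFunc ℂ) : ordAt a f⁻¹ = -ordAt a f := by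
  rcases eq_or_ne f 0 with rfl | hf
  · simp
  · nth_rw 1 [← num_div_denom f]
    rw [inv_div, ordAt_div_algebraMap a (denom_ne_zero f) (num_ne_zero hf), ordAt]
    ring

theorem ordAt_div (a : ℂ) {f g : RatFunc ℂ} (hf : f ≠ 0) (hg : g ≠ 0) :
    ordAt a (f / g) = ordAt a f - ordAt a g := by
  rw [div_eq_mul_inv, ordAt_mul a hf (inv_ne_zero hg), ordAt_inv, sub_eq_add_neg]

theorem ordAt_pow (a : ℂ) {f : RatFunc ℂ} (hf : f ≠ 0) (k : ℕ) :
    ordAt a (f ^ k) = k * ordAt a f := by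
  induction k with
  | zero => simp [ordAt]
  | succ k ih =>
    rw [pow_succ, ordAt_mul a (pow_ne_zero _ hf) hf, ih]
    push_cast
    ring

theorem ordAt_zpow (a : ℂ) {f : RatFunc ℂ} (hf : f ≠ 0) (k : ℤ) :
    ordAt a (f ^ k) = k * ordAt a f := by
  cases k with
  | ofNat k => simpa using ordAt_pow a hf k
  | negSucc k =>
    rw [zpow_negSucc, ordAt_inv, ordAt_pow a hf, Int.negSucc_eq]
    push_cast
    ring

theorem ordAt_prod (a : ℂ) {ι : Type*} (s : Finset ι) {F : ι → RatFunc ℂ}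
    (hF : ∀ i ∈ s, F i ≠ 0) : ordAt a (∏ i ∈ s, F i) = ∑ i ∈ s, ordAt a (F i) := by
  induction s using Finset.cons_induction with
  | empty => simp [ordAt]
  | cons i s hi ih =>
    rw [Finset.forall_mem_cons] at hF
    rw [Finset.prod_cons, Finset.sum_cons, ordAt_mul a hF.1 (Finset.prod_ne_zero_iff.2 hF.2),
      ih hF.2]

theorem ordAt_X_sub_C (a b : ℂ) :
    ordAt a (RatFunc.X - RatFunc.C b) = if a = b then 1 else 0 := by
  rw [← algebraMap_X, ← algebraMap_C, ← map_sub, ordAt_algebraMap, rootMultiplicity_X_sub_C]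
  split_ifs <;> rfl

theorem ordAt_X (a : ℂ) : ordAt a (RatFunc.X : RatFunc ℂ) = if a = 0 then 1 else 0 := by
  simpa only [map_zero, sub_zero] using ordAt_X_sub_C a 0

theorem rootMultiplicity_num_eq_zero_or_denom (f : RatFunc ℂ) (a : ℂ) :
    f.num.rootMultiplicity a = 0 ∨ f.denom.rootMultiplicity a = 0 := by
  by_contra! h
  obtain ⟨u, v, huv⟩ := isCoprime_num_denom f
  have hnum := (rootMultiplicity_pos (num_ne_zero fun hf => by simp [hf] at h)).1
    (Nat.pos_of_ne_zero h.1)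
  have hden := (rootMultiplicity_pos (denom_ne_zero f)).1 (Nat.pos_of_ne_zero h.2)
  simpa [hnum.eq_zero, hden.eq_zero] using congrArg (eval a) huv

theorem eval_num_eq_zero_iff {f : RatFunc ℂ} (hf : f ≠ 0) (a : ℂ) :
    f.num.eval a = 0 ↔ 0 < ordAt a f := by
  rw [← IsRoot.def, ← rootMultiplicity_pos (num_ne_zero hf), ordAt]
  have := rootMultiplicity_num_eq_zero_or_denom f a
  omega

theorem eval_denom_eq_zero_iff (f : RatFunc ℂ) (a : ℂ) :
    f.denom.eval a = 0 ↔ ordAt a f < 0 := by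
  rw [← IsRoot.def, ← rootMultiplicity_pos (denom_ne_zero f), ordAt]
  have := rootMultiplicity_num_eq_zero_or_denom f a
  omega

theorem ordAt_eq_zero_of_notMem_roots {f : RatFunc ℂ} (hf : f ≠ 0) {a : ℂ}
    (ha : a ∉ (f.num * f.denom).roots) : ordAt a f = 0 := by
  rw [mem_roots (mul_ne_zero (num_ne_zero hf) (denom_ne_zero f)), IsRoot.def,
    Polynomial.eval_mul, mul_eq_zero, eval_num_eq_zero_iff hf, eval_denom_eq_zero_iff] at ha
  omega

theorem eq_C_of_forall_ordAt_eq_zero {f : RatFunc ℂ} (hf : f ≠ 0) (h : ∀ a, ordAt a f = 0) :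
    ∃ c : ℂ, f = RatFunc.C c := by
  have natDegree_eq_zero {p : ℂ[X]} (hp : ∀ a, ¬p.IsRoot a) : p.natDegree = 0 :=
    IsAlgClosed.roots_eq_zero_iff_natDegree_eq_zero.1 <|
      Multiset.eq_zero_of_forall_notMem fun a ha => hp a (isRoot_of_mem_roots ha)
  have hnum := natDegree_eq_zero fun a ha => ((eval_num_eq_zero_iff hf a).1 ha).ne' (h a)
  have hden : f.denom = 1 := (monic_denom f).natDegree_eq_zero.1 <|
    natDegree_eq_zero fun a ha => ((eval_denom_eq_zero_iff f a).1 ha).ne (h a)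
  refine ⟨f.num.coeff 0, ?_⟩
  rw [← num_div_denom f, hden, map_one, div_one, eq_C_of_natDegree_eq_zero hnum]
  simp [← algebraMap_C]

theorem exists_eq_pow_of_forall_dvd_ordAt {n : ℕ} (hn : n ≠ 0) {f : RatFunc ℂ} (hf : f ≠ 0)
    (h : ∀ a, (n : ℤ) ∣ ordAt a f) : ∃ R, f = R ^ n := by
  set S := (f.num * f.denom).roots.toFinset
  set R₀ : RatFunc ℂ := ∏ a ∈ S, (RatFunc.X - RatFunc.C a) ^ (ordAt a f / n)
  have hX_sub_C (a : ℂ) : (RatFunc.X - RatFunc.C a : RatFunc ℂ) ≠ 0 :=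
    ne_zero_of_ordAt_ne_zero (a := a) (by simp [ordAt_X_sub_C])
  have hR₀ : R₀ ≠ 0 := Finset.prod_ne_zero_iff.2 fun a _ => zpow_ne_zero _ (hX_sub_C a)
  have hord (b : ℂ) : ordAt b (f / R₀ ^ n) = 0 := by
    rw [ordAt_div b hf (pow_ne_zero _ hR₀), ordAt_pow b hR₀,
      ordAt_prod b S fun a _ => zpow_ne_zero _ (hX_sub_C a)]
    simp only [ordAt_zpow b (hX_sub_C _), ordAt_X_sub_C, mul_ite, mul_one, mul_zero,
      Finset.sum_ite_eq, S, Multiset.mem_toFinset]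
    split_ifs with hb
    · rw [Int.mul_ediv_cancel' (h b), sub_self]
    · rw [ordAt_eq_zero_of_notMem_roots hf hb, sub_zero]
  obtain ⟨c, hc⟩ := eq_C_of_forall_ordAt_eq_zero (div_ne_zero hf (pow_ne_zero _ hR₀)) hord
  obtain ⟨d, rfl⟩ := IsAlgClosed.exists_pow_nat_eq c (Nat.pos_of_ne_zero hn)
  refine ⟨RatFunc.C d * R₀, ?_⟩
  rw [mul_pow, ← map_pow, ← hc, div_mul_cancel₀ _ (pow_ne_zero _ hR₀)]

theorem fmap_coe (f : RatFunc ℂ) (a : ℂ) :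
    fmap f a = if f.denom.eval a = 0 then ∞ else ((f.num.eval a / f.denom.eval a : ℂ) : CP1) :=
  rfl

theorem fmap_coe_eq_zero_or_infty_iff {f : RatFunc ℂ} (hf : f ≠ 0) (a : ℂ) :
    (fmap f a = ((0 : ℂ) : CP1) ∨ fmap f a = ∞) ↔ ordAt a f ≠ 0 := by
  rw [fmap_coe]
  split_ifs with hd
  · simpa using ((eval_denom_eq_zero_iff f a).1 hd).ne
  · have := (eval_denom_eq_zero_iff f a).not.1 hd
    simp only [OnePoint.coe_eq_coe, div_eq_zero_iff, hd, or_false, OnePoint.coe_ne_infty,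
      eval_num_eq_zero_iff hf]
    omega

theorem locDegFin_eq_natAbs_ordAt {f : RatFunc ℂ} {a : ℂ} (h : ordAt a f ≠ 0) :
    locDegFin f a = (ordAt a f).natAbs := by
  have hf := ne_zero_of_ordAt_ne_zero h
  have := rootMultiplicity_num_eq_zero_or_denom f a
  unfold locDegFin
  split_ifs with hd
  · have := (eval_denom_eq_zero_iff f a).1 hd
    unfold ordAt at *
    omega
  · have hpos : 0 < ordAt a f := by
      have := (eval_denom_eq_zero_iff f a).not.1 hd
      omega
    rw [(eval_num_eq_zero_iff hf a).2 hpos, zero_div, map_zero, zero_mul, sub_zero]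
    unfold ordAt at *
    omega

theorem evalInf_eq_zero_or_infty_iff {f : RatFunc ℂ} (hf : f ≠ 0) :
    (evalInf f = ((0 : ℂ) : CP1) ∨ evalInf f = ∞) ↔ f.intDegree ≠ 0 := by
  have hlc : f.num.leadingCoeff / f.denom.leadingCoeff ≠ 0 :=
    div_ne_zero (leadingCoeff_ne_zero.2 (num_ne_zero hf))
      (leadingCoeff_ne_zero.2 (denom_ne_zero f))
  unfold evalInf intDegree
  split_ifs <;> simp [hlc] <;> omega

theorem num_inv_X : ((RatFunc.X : RatFunc ℂ)⁻¹).num = 1 := by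
  rw [← algebraMap_X, inv_eq_one_div, ← map_one (algebraMap ℂ[X] (RatFunc ℂ)), num_div]
  simp

theorem denom_inv_X : ((RatFunc.X : RatFunc ℂ)⁻¹).denom = Polynomial.X := by
  rw [← algebraMap_X, inv_eq_one_div, ← map_one (algebraMap ℂ[X] (RatFunc ℂ)),
    denom_div _ Polynomial.X_ne_zero]
  simp

theorem comp_inv_X_left (g : RatFunc ℂ) : comp RatFunc.X⁻¹ g = g⁻¹ := by
  rw [comp, RatFunc.eval, num_inv_X, denom_inv_X, eval₂_one, eval₂_X, one_div]

theorem eval₂_inv_X (p : ℂ[X]) :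
    p.eval₂ (algebraMap ℂ (RatFunc ℂ)) RatFunc.X⁻¹ =
      algebraMap ℂ[X] (RatFunc ℂ) p.reverse / RatFunc.X ^ p.natDegree := by
  let _ : Invertible (RatFunc.X⁻¹ : RatFunc ℂ) := invertibleOfNonzero (inv_ne_zero X_ne_zero)
  rw [← eval₂_reverse_mul_pow, invOf_eq_inv, inv_inv, inv_pow, ← div_eq_mul_inv, ← aeval_def,
    ← algebraMap_X, aeval_algebraMap_apply, aeval_X_left_apply]

theorem eval₂_inv_X_ne_zero {p : ℂ[X]} (hp : p ≠ 0) :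
    p.eval₂ (algebraMap ℂ (RatFunc ℂ)) RatFunc.X⁻¹ ≠ 0 := by
  rw [eval₂_inv_X]
  exact div_ne_zero (algebraMap_ne_zero (by simpa [reverse_eq_zero] using hp))
    (pow_ne_zero _ X_ne_zero)

theorem ordAt_zero_eval₂_inv_X {p : ℂ[X]} (hp : p ≠ 0) :
    ordAt 0 (p.eval₂ (algebraMap ℂ (RatFunc ℂ)) RatFunc.X⁻¹) = -p.natDegree := by
  have hrev : p.reverse ≠ 0 := by simpa [reverse_eq_zero] using hp
  rw [eval₂_inv_X, ordAt_div 0 (algebraMap_ne_zero hrev) (pow_ne_zero _ X_ne_zero),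
    ordAt_algebraMap, ordAt_pow 0 X_ne_zero, ordAt_X, if_pos rfl,
    rootMultiplicity_eq_zero (by simpa [← coeff_zero_eq_eval_zero] using hp)]
  simp

/-- `comp X⁻¹ (comp f X⁻¹)` is `1 / f(1 / z)`, the chart of `f` at `∞` used by `locDeg`. -/
theorem ordAt_zero_comp_inv_X {f : RatFunc ℂ} (hf : f ≠ 0) :
    ordAt 0 (comp RatFunc.X⁻¹ (comp f RatFunc.X⁻¹)) = f.intDegree := by
  rw [comp_inv_X_left, ordAt_inv, comp, RatFunc.eval,
    ordAt_div 0 (eval₂_inv_X_ne_zero (num_ne_zero hf)) (eval₂_inv_X_ne_zero (denom_ne_zero f)),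
    ordAt_zero_eval₂_inv_X (num_ne_zero hf), ordAt_zero_eval₂_inv_X (denom_ne_zero f),
    intDegree]
  ring

def ord (f : RatFunc ℂ) : CP1 → ℤ
  | ∞ => -f.intDegree
  | (a : ℂ) => ordAt a f

theorem ord_mul {f g : RatFunc ℂ} (hf : f ≠ 0) (hg : g ≠ 0) (z : CP1) :
    ord (f * g) z = ord f z + ord g z := by
  induction z using OnePoint.rec with
  | infty => simp only [ord, intDegree_mul hf hg, neg_add]
  | coe a => exact ordAt_mul a hf hg

theorem ord_pow {f : RatFunc ℂ} (hf : f ≠ 0) (k : ℕ) (z : CP1) :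
    ord (f ^ k) z = k * ord f z := by
  induction k with
  | zero => induction z using OnePoint.rec <;> simp [ord, ordAt]
  | succ k ih =>
    rw [pow_succ, ord_mul (pow_ne_zero _ hf) hf, ih]
    push_cast
    ring

theorem ord_X (z : CP1) :
    ord RatFunc.X z = if z = ((0 : ℂ) : CP1) then 1 else if z = ∞ then -1 else 0 := by
  induction z using OnePoint.rec with
  | infty => simp [ord, intDegree_X]
  | coe a => simp [ord, ordAt_X]

theorem fmap_eq_zero_or_infty_iff {f : RatFunc ℂ} (hf : f ≠ 0) (z : CP1) :
    (fmap f z = ((0 : ℂ) : CP1) ∨ fmap f z = ∞) ↔ ord f z ≠ 0 := by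
  induction z using OnePoint.rec with
  | infty =>
    change (evalInf f = _ ∨ evalInf f = ∞) ↔ -f.intDegree ≠ 0
    simpa using evalInf_eq_zero_or_infty_iff hf
  | coe a => exact fmap_coe_eq_zero_or_infty_iff hf a

theorem locDeg_eq_natAbs_ord {f : RatFunc ℂ} {z : CP1} (hf : f ≠ 0) (h : ord f z ≠ 0) :
    locDeg f z = (ord f z).natAbs := by
  induction z using OnePoint.rec with
  | infty =>
    have h' : ordAt 0 (comp RatFunc.X⁻¹ (comp f RatFunc.X⁻¹)) ≠ 0 := by
      rw [ordAt_zero_comp_inv_X hf]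
      simpa [ord] using h
    change locDegFin _ 0 = _
    rw [locDegFin_eq_natAbs_ordAt h', ordAt_zero_comp_inv_X hf]
    exact (Int.natAbs_neg _).symm
  | coe a => exact locDegFin_eq_natAbs_ordAt h

theorem nu_fmap {n : ℕ} {ν : CP1 → ℕ}
    (hν : ∀ z : CP1, ν z = if z = ((0 : ℂ) : CP1) ∨ z = ∞ then n else 1)
    {f : RatFunc ℂ} (hf : f ≠ 0) (z : CP1) :
    ν (fmap f z) = if ord f z = 0 then 1 else n := by
  simp only [hν, fmap_eq_zero_or_infty_iff hf, ite_not]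

theorem isMinHoloBetween_iff {n : ℕ} {ν : CP1 → ℕ}
    (hν : ∀ z : CP1, ν z = if z = ((0 : ℂ) : CP1) ∨ z = ∞ then n else 1)
    (hn : 2 ≤ n) {f : RatFunc ℂ} (hf : f ≠ 0) :
    IsMinHoloBetween f ν ν ↔ ∀ z : CP1,
      if z = ((0 : ℂ) : CP1) ∨ z = ∞ then IsCoprime (ord f z) n else (n : ℤ) ∣ ord f z := by
  refine forall_congr' fun z => ?_
  rw [nu_fmap hν hf, hν z]
  by_cases hz : z = ((0 : ℂ) : CP1) ∨ z = ∞ <;> by_cases ho : ord f z = 0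
  · simp only [hz, ho, if_true, Nat.gcd_one_right, mul_one]
    rw [isCoprime_zero_left, Int.isUnit_iff]
    omega
  · rw [if_pos hz, if_neg ho, if_pos hz, locDeg_eq_natAbs_ord hf ho, left_eq_mul₀ (by omega),
      Int.isCoprime_iff_gcd_eq_one, Int.gcd, Int.natAbs_natCast]
  · simp [hz, ho]
  · rw [if_neg hz, if_neg ho, if_neg hz, locDeg_eq_natAbs_ord hf ho, one_mul,
      eq_comm, Nat.gcd_eq_right_iff_dvd, Int.natCast_dvd]

theorem exists_eq_X_pow_mul_pow {n : ℕ} (hn : 2 ≤ n) {f : RatFunc ℂ} (hf : f ≠ 0)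
    (h0 : IsCoprime (ordAt 0 f) n) (h : ∀ a ≠ 0, (n : ℤ) ∣ ordAt a f) :
    ∃ (R : RatFunc ℂ) (r : ℕ), 1 ≤ r ∧ r ≤ n - 1 ∧ Nat.gcd r n = 1 ∧
      f = RatFunc.X ^ r * R ^ n := by
  obtain ⟨r, hr⟩ : ∃ r : ℕ, (r : ℤ) = ordAt 0 f % n :=
    ⟨_, Int.toNat_of_nonneg (Int.emod_nonneg _ (by omega))⟩
  have hrn : r < n := by
    have := Int.emod_lt_of_pos (ordAt 0 f) (by omega : (0 : ℤ) < n)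
    omega
  have hcop : IsCoprime (r : ℤ) n := by
    rw [hr, Int.emod_def, sub_eq_add_neg, ← mul_neg]
    exact h0.add_mul_left_left _
  have hr1 : 1 ≤ r := by
    by_contra! hr0
    rw [Nat.lt_one_iff.1 hr0, Nat.cast_zero, isCoprime_zero_left, Int.isUnit_iff] at hcop
    omega
  have hXr : (RatFunc.X : RatFunc ℂ) ^ r ≠ 0 := pow_ne_zero _ X_ne_zero
  obtain ⟨R, hR⟩ := exists_eq_pow_of_forall_dvd_ordAt (n := n) (by omega) (div_ne_zero hf hXr)
    fun a => by
      rw [ordAt_div a hf hXr, ordAt_pow a X_ne_zero, ordAt_X]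
      split_ifs with ha
      · subst ha
        exact ⟨ordAt 0 f / n, by rw [hr, Int.emod_def]; ring⟩
      · simpa using h a ha
  refine ⟨R, r, hr1, by omega, Nat.isCoprime_iff_coprime.1 hcop, ?_⟩
  rw [← hR, mul_div_cancel₀ _ hXr]

theorem isCoprime_or_dvd_ord_X_pow_mul_pow {n r : ℕ} (hr : Nat.gcd r n = 1) {R : RatFunc ℂ}
    (hR : R ≠ 0) (z : CP1) :
    if z = ((0 : ℂ) : CP1) ∨ z = ∞ then IsCoprime (ord (RatFunc.X ^ r * R ^ n) z) n
    else (n : ℤ) ∣ ord (RatFunc.X ^ r * R ^ n) z := by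
  have hcop : IsCoprime (r : ℤ) n := Nat.isCoprime_iff_coprime.2 hr
  rw [ord_mul (pow_ne_zero _ X_ne_zero) (pow_ne_zero _ hR), ord_pow X_ne_zero, ord_pow hR, ord_X]
  by_cases h0 : z = ((0 : ℂ) : CP1)
  · simpa [h0] using hcop.add_mul_left_left (ord R z)
  by_cases hinf : z = ∞
  · simpa [hinf] using hcop.neg_left.add_mul_left_left (ord R z)
  · simp [h0, hinf]

end Pk

open Pk in
/-- Let `n ≥ 2` and let `O` be the orbifold with `ν(0) = ν(∞) = n` and
`ν(z) = 1` otherwise. A non-constant rational function `A` is a minimal holomorphic map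
`A : O → O` iff `A = z^r·R(z)^n` for some rational `R` and some `1 ≤ r ≤ n-1` with
`gcd(r,n) = 1`. -/
theorem statement8 (n : ℕ) (hn : 2 ≤ n) (ν : CP1 → ℕ)
    (hν : ∀ z : CP1, ν z = if z = ((0 : ℂ) : CP1) ∨ z = ∞ then n else 1)
    (A : RatFunc ℂ) (hA : 1 ≤ deg A) :
    IsMinHoloBetween A ν ν ↔
      ∃ (R : RatFunc ℂ) (r : ℕ), 1 ≤ r ∧ r ≤ n - 1 ∧ Nat.gcd r n = 1 ∧
        A = RatFunc.X ^ r * R ^ n := by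
  have hA0 : A ≠ 0 := by
    rintro rfl
    simp [deg] at hA
  rw [isMinHoloBetween_iff hν hn hA0]
  constructor
  · intro h
    refine exists_eq_X_pow_mul_pow hn hA0 ?_ fun a ha => ?_
    · simpa [ord] using h ((0 : ℂ) : CP1)
    · simpa [ha, ord] using h a
  · rintro ⟨R, r, -, -, hr, rfl⟩
    exact isCoprime_or_dvd_ord_X_pow_mul_pow hr
      (ne_zero_pow (by omega) (right_ne_zero_of_mul hA0))
end
end

section
/- Let O be an orbifold on ℂP¹ with χ(O) > 0, and let D be a rational function of degree at least two such that D: O → O is a minimal holomorphic map between orbifolds. If deg D ≠ 2, then c(O) ⊆ c(O₂^D); that is, every point z with ν(z) > 1 is a critical value of D. -/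
open Polynomial OnePoint
open scoped Classical

noncomputable section

namespace Pk

open Polynomial

lemma no_common_root (f : RatFunc ℂ) {w : ℂ} (h1 : f.num.eval w = 0)
    (h2 : f.denom.eval w = 0) : False := by
  obtain ⟨a, b, hab⟩ := f.isCoprime_num_denom
  have := congrArg (Polynomial.eval w) hab
  simp [h1, h2] at this

lemma isCoprime_of_no_common_root {p q : Polynomial ℂ} (hp : p ≠ 0)
    (h : ∀ x, p.eval x = 0 → q.eval x ≠ 0) : IsCoprime p q := by
  classical
  rw [← EuclideanDomain.gcd_isUnit_iff]
  by_contra hu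
  have hg0 : EuclideanDomain.gcd p q ≠ 0 := by
    intro h0
    exact hp (EuclideanDomain.gcd_eq_zero_iff.mp h0).1
  have hdeg : 0 < (EuclideanDomain.gcd p q).degree := by
    rcases lt_or_eq_of_le (Polynomial.zero_le_degree_iff.mpr hg0) with h' | h'
    · exact h'
    · exact absurd (Polynomial.isUnit_iff_degree_eq_zero.mpr h'.symm) hu
  obtain ⟨x, hx⟩ := Complex.exists_root hdeg
  have h1 : p.eval x = 0 :=
    Polynomial.eval_eq_zero_of_dvd_of_eval_eq_zero (EuclideanDomain.gcd_dvd_left p q) hx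
  have h2 : q.eval x = 0 :=
    Polynomial.eval_eq_zero_of_dvd_of_eval_eq_zero (EuclideanDomain.gcd_dvd_right p q) hx
  exact h x h1 h2

lemma num_denom_repr {p q : Polynomial ℂ} (hq : q ≠ 0) (hco : IsCoprime p q) :
    ∃ c : ℂ, c ≠ 0 ∧ (algebraMap (Polynomial ℂ) (RatFunc ℂ) p / algebraMap _ _ q).num
        = Polynomial.C c * p ∧
      (algebraMap (Polynomial ℂ) (RatFunc ℂ) p / algebraMap _ _ q).denom
        = Polynomial.C c * q := by
  classical
  have hu : IsUnit (gcd p q) := (_root_.gcd_isUnit_iff p q).mpr hco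
  obtain ⟨u, hu1, hu2⟩ := Polynomial.isUnit_iff.mp hu
  have hu0 : u ≠ 0 := hu1.ne_zero
  have hCu : (Polynomial.C u : Polynomial ℂ) ≠ 0 := by simpa using hu0
  have hdivq : q / gcd p q = Polynomial.C u⁻¹ * q := by
    rw [← hu2]
    have : q = Polynomial.C u⁻¹ * q * Polynomial.C u := by
      rw [mul_comm, ← mul_assoc, ← Polynomial.C_mul, mul_inv_cancel₀ hu0]; simp
    conv_lhs => rw [this]
    exact mul_div_cancel_right₀ _ hCu
  have hdivp : p / gcd p q = Polynomial.C u⁻¹ * p := by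
    rw [← hu2]
    have : p = Polynomial.C u⁻¹ * p * Polynomial.C u := by
      rw [mul_comm, ← mul_assoc, ← Polynomial.C_mul, mul_inv_cancel₀ hu0]; simp
    conv_lhs => rw [this]
    exact mul_div_cancel_right₀ _ hCu
  refine ⟨(q.leadingCoeff)⁻¹, inv_ne_zero (Polynomial.leadingCoeff_ne_zero.mpr hq), ?_, ?_⟩
  · rw [RatFunc.num_div, hdivq, hdivp]
    have : (Polynomial.C u⁻¹ * q).leadingCoeff = u⁻¹ * q.leadingCoeff := by
      simp [Polynomial.leadingCoeff_mul]
    rw [this, ← mul_assoc, ← Polynomial.C_mul]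
    congr 2
    rw [mul_inv, inv_inv, mul_comm u, mul_assoc, mul_inv_cancel₀ hu0, mul_one]
  · rw [RatFunc.denom_div _ hq, hdivq]
    have : (Polynomial.C u⁻¹ * q).leadingCoeff = u⁻¹ * q.leadingCoeff := by
      simp [Polynomial.leadingCoeff_mul]
    rw [this, ← mul_assoc, ← Polynomial.C_mul]
    congr 2
    rw [mul_inv, inv_inv, mul_comm u, mul_assoc, mul_inv_cancel₀ hu0, mul_one]

end Pk

namespace Pk

open Polynomial

lemma rootMultiplicity_C_mul {c : ℂ} (hc : c ≠ 0) (h : Polynomial ℂ) (a : ℂ) :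
    (Polynomial.C c * h).rootMultiplicity a = h.rootMultiplicity a := by
  rcases eq_or_ne h 0 with rfl | h0
  · simp
  · rw [Polynomial.rootMultiplicity_mul (x := a) (mul_ne_zero (fun hC => hc (by simpa using hC)) h0),
      Polynomial.rootMultiplicity_C, zero_add]

lemma locDegFin_repr {f : RatFunc ℂ} {p q : Polynomial ℂ} {c : ℂ} (hc : c ≠ 0)
    (hnum : f.num = Polynomial.C c * p) (hden : f.denom = Polynomial.C c * q) (a : ℂ) :
    locDegFin f a = if q.eval a = 0 then q.rootMultiplicity a
      else (p - Polynomial.C (p.eval a / q.eval a) * q).rootMultiplicity a := by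
  rw [locDegFin, hnum, hden]
  by_cases hq : q.eval a = 0
  · rw [if_pos (by simp [hq]), if_pos hq, rootMultiplicity_C_mul hc]
  · rw [if_neg (by simp [hq, hc]), if_neg hq]
    have hval : (Polynomial.C c * p).eval a / (Polynomial.C c * q).eval a
        = p.eval a / q.eval a := by
      simp only [Polynomial.eval_mul, Polynomial.eval_C]
      exact mul_div_mul_left _ _ hc
    rw [hval]
    have h2 : Polynomial.C c * p - Polynomial.C (p.eval a / q.eval a) * (Polynomial.C c * q)
        = Polynomial.C c * (p - Polynomial.C (p.eval a / q.eval a) * q) := by ring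
    rw [h2, rootMultiplicity_C_mul hc]

lemma fmap_repr {f : RatFunc ℂ} {p q : Polynomial ℂ} {c : ℂ} (hc : c ≠ 0)
    (hnum : f.num = Polynomial.C c * p) (hden : f.denom = Polynomial.C c * q) (a : ℂ) :
    fmap f (OnePoint.some a)
      = if q.eval a = 0 then ∞ else OnePoint.some (p.eval a / q.eval a) := by
  show (if f.denom.eval a = 0 then ∞ else OnePoint.some (f.num.eval a / f.denom.eval a)) = _
  rw [hnum, hden]
  by_cases hq : q.eval a = 0
  · simp [hq]
  · rw [if_neg (by simp [hq, hc]), if_neg hq]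
    congr 1
    simp only [Polynomial.eval_mul, Polynomial.eval_C]
    exact mul_div_mul_left _ _ hc

lemma aeval_ratFuncX (p : Polynomial ℂ) :
    Polynomial.aeval (RatFunc.X : RatFunc ℂ) p = algebraMap (Polynomial ℂ) (RatFunc ℂ) p := by
  have := Polynomial.aeval_algHom_apply (IsScalarTower.toAlgHom ℂ (Polynomial ℂ) (RatFunc ℂ))
    Polynomial.X p
  simpa [RatFunc.algebraMap_X] using this

lemma num_X_inv : (RatFunc.X : RatFunc ℂ)⁻¹.num = 1 := by
  have : (RatFunc.X : RatFunc ℂ)⁻¹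
      = algebraMap (Polynomial ℂ) (RatFunc ℂ) 1 / algebraMap (Polynomial ℂ) (RatFunc ℂ) Polynomial.X := by
    rw [map_one, one_div, RatFunc.algebraMap_X]
  rw [this, RatFunc.num_div]
  simp [EuclideanDomain.gcd_one_left]

lemma denom_X_inv : (RatFunc.X : RatFunc ℂ)⁻¹.denom = Polynomial.X := by
  have : (RatFunc.X : RatFunc ℂ)⁻¹
      = algebraMap (Polynomial ℂ) (RatFunc ℂ) 1 / algebraMap (Polynomial ℂ) (RatFunc ℂ) Polynomial.X := by
    rw [map_one, one_div, RatFunc.algebraMap_X]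
  rw [this, RatFunc.denom_div _ Polynomial.X_ne_zero]
  simp [EuclideanDomain.gcd_one_left]

lemma comp_X_inv_left (h : RatFunc ℂ) : comp (RatFunc.X)⁻¹ h = h⁻¹ := by
  rw [comp, RatFunc.eval, num_X_inv, denom_X_inv]
  simp [Polynomial.eval₂_X, one_div]

lemma comp_eq_div (f h : RatFunc ℂ) :
    comp f h = Polynomial.aeval h f.num / Polynomial.aeval h f.denom := by
  rw [comp, RatFunc.eval, Polynomial.aeval_def, Polynomial.aeval_def]

end Pk

namespace Pk

open Polynomial

lemma aeval_X_inv (P : Polynomial ℂ) :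
    Polynomial.aeval ((RatFunc.X : RatFunc ℂ))⁻¹ P
      = algebraMap (Polynomial ℂ) (RatFunc ℂ) P.reverse
        * (RatFunc.X : RatFunc ℂ)⁻¹ ^ P.natDegree := by
  letI : Invertible ((RatFunc.X : RatFunc ℂ)⁻¹) :=
    invertibleOfNonzero (inv_ne_zero RatFunc.X_ne_zero)
  have h := Polynomial.eval₂_reverse_mul_pow (algebraMap ℂ (RatFunc ℂ))
      ((RatFunc.X : RatFunc ℂ)⁻¹) P
  rw [invOf_eq_inv, inv_inv] at h
  rw [Polynomial.aeval_def, ← h]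
  congr 1
  rw [← Polynomial.aeval_def, aeval_ratFuncX]

lemma g_repr (f : RatFunc ℂ) (hf : f ≠ 0) :
    comp (RatFunc.X)⁻¹ (comp f (RatFunc.X)⁻¹)
      = algebraMap (Polynomial ℂ) (RatFunc ℂ)
          (Polynomial.X ^ (f.num.natDegree - f.denom.natDegree) * f.denom.reverse)
        / algebraMap (Polynomial ℂ) (RatFunc ℂ)
          (Polynomial.X ^ (f.denom.natDegree - f.num.natDegree) * f.num.reverse) := by
  have hY : (RatFunc.X : RatFunc ℂ) ≠ 0 := RatFunc.X_ne_zero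
  have hN : f.num ≠ 0 := RatFunc.num_ne_zero hf
  have hM : f.denom ≠ 0 := f.denom_ne_zero
  have hA : algebraMap (Polynomial ℂ) (RatFunc ℂ) f.num.reverse ≠ 0 :=
    RatFunc.algebraMap_ne_zero (by rwa [Ne, Polynomial.reverse_eq_zero])
  have hB : algebraMap (Polynomial ℂ) (RatFunc ℂ) f.denom.reverse ≠ 0 :=
    RatFunc.algebraMap_ne_zero (by rwa [Ne, Polynomial.reverse_eq_zero])
  rw [comp_X_inv_left, comp_eq_div, aeval_X_inv, aeval_X_inv]
  rw [map_mul, map_mul, map_pow, map_pow, RatFunc.algebraMap_X]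
  rw [inv_div]
  rw [div_eq_div_iff
    (mul_ne_zero hA (pow_ne_zero _ (inv_ne_zero hY)))
    (mul_ne_zero (pow_ne_zero _ hY) hA)]
  have key : ∀ k l : ℕ, ((RatFunc.X : RatFunc ℂ)⁻¹) ^ k * RatFunc.X ^ (k - l)
      = ((RatFunc.X : RatFunc ℂ)⁻¹) ^ l * RatFunc.X ^ (l - k) := by
    intro k l
    rw [inv_pow, inv_pow]
    rw [inv_mul_eq_div, inv_mul_eq_div, div_eq_div_iff (pow_ne_zero _ hY) (pow_ne_zero _ hY)]
    rw [← pow_add, ← pow_add]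
    congr 1
    omega
  calc algebraMap (Polynomial ℂ) (RatFunc ℂ) f.denom.reverse
        * (RatFunc.X : RatFunc ℂ)⁻¹ ^ f.denom.natDegree
        * (RatFunc.X ^ (f.denom.natDegree - f.num.natDegree)
          * algebraMap (Polynomial ℂ) (RatFunc ℂ) f.num.reverse)
      = (algebraMap (Polynomial ℂ) (RatFunc ℂ) f.denom.reverse
          * algebraMap (Polynomial ℂ) (RatFunc ℂ) f.num.reverse)
        * ((RatFunc.X : RatFunc ℂ)⁻¹ ^ f.denom.natDegree
          * RatFunc.X ^ (f.denom.natDegree - f.num.natDegree)) := by ring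
    _ = (algebraMap (Polynomial ℂ) (RatFunc ℂ) f.denom.reverse
          * algebraMap (Polynomial ℂ) (RatFunc ℂ) f.num.reverse)
        * ((RatFunc.X : RatFunc ℂ)⁻¹ ^ f.num.natDegree
          * RatFunc.X ^ (f.num.natDegree - f.denom.natDegree)) := by rw [key]
    _ = RatFunc.X ^ (f.num.natDegree - f.denom.natDegree)
        * algebraMap (Polynomial ℂ) (RatFunc ℂ) f.denom.reverse
        * (algebraMap (Polynomial ℂ) (RatFunc ℂ) f.num.reverse
          * (RatFunc.X : RatFunc ℂ)⁻¹ ^ f.num.natDegree) := by ring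

lemma reverse_eval_zero_num (f : RatFunc ℂ) :
    f.num.reverse.eval 0 = f.num.leadingCoeff := by
  rw [← Polynomial.coeff_zero_eq_eval_zero, Polynomial.coeff_zero_reverse]

lemma reverse_eval_zero_denom (f : RatFunc ℂ) :
    f.denom.reverse.eval 0 = 1 := by
  rw [← Polynomial.coeff_zero_eq_eval_zero, Polynomial.coeff_zero_reverse]
  exact f.monic_denom

lemma reverse_root {P : Polynomial ℂ} {x : ℂ} (hx : x ≠ 0) (h : P.reverse.eval x = 0) :
    P.eval x⁻¹ = 0 := by
  letI : Invertible (x⁻¹) := invertibleOfNonzero (inv_ne_zero hx)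
  have := Polynomial.eval₂_reverse_eq_zero_iff (RingHom.id ℂ) (x⁻¹) P
  rw [invOf_eq_inv, inv_inv] at this
  have h2 : Polynomial.eval₂ (RingHom.id ℂ) x P.reverse = 0 := h
  exact this.mp h2

lemma g_num_denom (f : RatFunc ℂ) (hf : f ≠ 0) :
    ∃ c : ℂ, c ≠ 0 ∧
      (comp (RatFunc.X)⁻¹ (comp f (RatFunc.X)⁻¹)).num
        = Polynomial.C c
          * (Polynomial.X ^ (f.num.natDegree - f.denom.natDegree) * f.denom.reverse) ∧
      (comp (RatFunc.X)⁻¹ (comp f (RatFunc.X)⁻¹)).denom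
        = Polynomial.C c
          * (Polynomial.X ^ (f.denom.natDegree - f.num.natDegree) * f.num.reverse) := by
  have hN : f.num ≠ 0 := RatFunc.num_ne_zero hf
  have hM : f.denom ≠ 0 := f.denom_ne_zero
  have hrevN : f.num.reverse ≠ 0 := by rwa [Ne, Polynomial.reverse_eq_zero]
  have hrevM : f.denom.reverse ≠ 0 := by rwa [Ne, Polynomial.reverse_eq_zero]
  have hq : Polynomial.X ^ (f.denom.natDegree - f.num.natDegree) * f.num.reverse ≠ 0 :=
    mul_ne_zero (pow_ne_zero _ Polynomial.X_ne_zero) hrevN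
  have hco : IsCoprime (Polynomial.X ^ (f.num.natDegree - f.denom.natDegree) * f.denom.reverse)
      (Polynomial.X ^ (f.denom.natDegree - f.num.natDegree) * f.num.reverse) := by
    apply isCoprime_of_no_common_root
      (mul_ne_zero (pow_ne_zero _ Polynomial.X_ne_zero) hrevM)
    intro x h1 h2
    rcases eq_or_ne x 0 with rfl | hx
    · -- at 0 : reverse denom evals to 1
      rw [Polynomial.eval_mul] at h1
      rcases mul_eq_zero.mp h1 with h1' | h1'
      · -- X^(m-n) vanishes at 0, so m > n, hence n - m = 0 and h2 gives lc num = 0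
        have hmn : f.denom.natDegree < f.num.natDegree := by
          by_contra hle
          rw [Nat.sub_eq_zero_of_le (not_lt.mp hle)] at h1'
          simpa using h1'
        rw [Polynomial.eval_mul, Nat.sub_eq_zero_of_le hmn.le] at h2
        simp only [pow_zero, Polynomial.eval_one, one_mul] at h2
        rw [reverse_eval_zero_num] at h2
        exact Polynomial.leadingCoeff_ne_zero.mpr hN h2
      · rw [reverse_eval_zero_denom] at h1'
        exact one_ne_zero h1'
    · rw [Polynomial.eval_mul, mul_eq_zero] at h1 h2
      have h1' : f.denom.reverse.eval x = 0 := by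
        rcases h1 with h | h
        · rw [Polynomial.eval_pow, Polynomial.eval_X] at h
          exact absurd h (pow_ne_zero _ hx)
        · exact h
      have h2' : f.num.reverse.eval x = 0 := by
        rcases h2 with h | h
        · rw [Polynomial.eval_pow, Polynomial.eval_X] at h
          exact absurd h (pow_ne_zero _ hx)
        · exact h
      exact no_common_root f (reverse_root hx h2') (reverse_root hx h1')
  obtain ⟨c, hc, h1, h2⟩ := num_denom_repr hq hco
  refine ⟨c, hc, ?_, ?_⟩
  · rw [g_repr f hf]; exact h1
  · rw [g_repr f hf]; exact h2

end Pk

namespace Pk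

open Polynomial

lemma rm0_X_pow_mul (k : ℕ) {h : Polynomial ℂ} (hh : h ≠ 0) :
    (Polynomial.X ^ k * h).rootMultiplicity 0 = k + h.natTrailingDegree := by
  rw [Polynomial.rootMultiplicity_eq_natTrailingDegree',
    Polynomial.natTrailingDegree_mul (pow_ne_zero _ Polynomial.X_ne_zero) hh,
    Polynomial.natTrailingDegree_X_pow]

lemma locDeg_inf_of_gt (f : RatFunc ℂ) (hf : f ≠ 0)
    (h : f.denom.natDegree < f.num.natDegree) :
    locDeg f ∞ = f.num.natDegree - f.denom.natDegree := by
  obtain ⟨c, hc, hnum, hden⟩ := g_num_denom f hf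
  rw [Nat.sub_eq_zero_of_le h.le, pow_zero, one_mul] at hden
  show locDegFin (comp (RatFunc.X)⁻¹ (comp f (RatFunc.X)⁻¹)) 0 = _
  rw [locDegFin_repr hc hnum hden 0]
  have hB0 : f.num.reverse.eval 0 ≠ 0 := by
    rw [reverse_eval_zero_num]
    exact Polynomial.leadingCoeff_ne_zero.mpr (RatFunc.num_ne_zero hf)
  rw [if_neg hB0]
  have hA0 : (Polynomial.X ^ (f.num.natDegree - f.denom.natDegree)
      * f.denom.reverse).eval 0 = 0 := by
    rw [Polynomial.eval_mul, Polynomial.eval_pow, Polynomial.eval_X,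
      zero_pow (Nat.sub_ne_zero_of_lt h), zero_mul]
  rw [hA0, zero_div, map_zero, zero_mul, sub_zero,
    rm0_X_pow_mul _ (by rw [Ne, Polynomial.reverse_eq_zero]; exact f.denom_ne_zero),
    Polynomial.natTrailingDegree_reverse, add_zero]

lemma locDeg_inf_of_lt (f : RatFunc ℂ) (hf : f ≠ 0)
    (h : f.num.natDegree < f.denom.natDegree) :
    locDeg f ∞ = f.denom.natDegree - f.num.natDegree := by
  obtain ⟨c, hc, hnum, hden⟩ := g_num_denom f hf
  show locDegFin (comp (RatFunc.X)⁻¹ (comp f (RatFunc.X)⁻¹)) 0 = _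
  rw [locDegFin_repr hc hnum hden 0]
  have hB0 : (Polynomial.X ^ (f.denom.natDegree - f.num.natDegree)
      * f.num.reverse).eval 0 = 0 := by
    rw [Polynomial.eval_mul, Polynomial.eval_pow, Polynomial.eval_X,
      zero_pow (Nat.sub_ne_zero_of_lt h), zero_mul]
  rw [if_pos hB0,
    rm0_X_pow_mul _ (by rw [Ne, Polynomial.reverse_eq_zero]; exact RatFunc.num_ne_zero hf),
    Polynomial.natTrailingDegree_reverse, add_zero]

lemma locDeg_inf_of_eq (f : RatFunc ℂ) (hf : f ≠ 0) (hd : 1 ≤ deg f)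
    (h : f.num.natDegree = f.denom.natDegree) :
    locDeg f ∞ = f.num.natDegree
      - (f.num - Polynomial.C f.num.leadingCoeff * f.denom).natDegree := by
  have hN : f.num ≠ 0 := RatFunc.num_ne_zero hf
  have ha : f.num.leadingCoeff ≠ 0 := Polynomial.leadingCoeff_ne_zero.mpr hN
  set a := f.num.leadingCoeff with ha_def
  set Q := f.num - Polynomial.C a * f.denom with hQ_def
  have hQ : Q ≠ 0 := by
    intro h0
    have hdvd : f.denom ∣ f.num := by
      refine ⟨Polynomial.C a, ?_⟩
      have := sub_eq_zero.mp h0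
      rw [this]; ring
    have hu := (f.isCoprime_num_denom).isUnit_of_dvd' hdvd dvd_rfl
    have hn0 : f.denom.natDegree = 0 := Polynomial.natDegree_eq_zero_of_isUnit hu
    have hm0 : f.num.natDegree = 0 := by rw [h, hn0]
    rw [deg, hm0, hn0] at hd
    omega
  have hQm : Q.natDegree ≤ f.num.natDegree := by
    refine le_trans (Polynomial.natDegree_sub_le _ _) ?_
    rw [Polynomial.natDegree_C_mul ha, ← h]
    simp
  obtain ⟨c, hc, hnum, hden⟩ := g_num_denom f hf
  rw [h, Nat.sub_self, pow_zero, one_mul] at hnum hden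
  show locDegFin (comp (RatFunc.X)⁻¹ (comp f (RatFunc.X)⁻¹)) 0 = _
  rw [locDegFin_repr hc hnum hden 0]
  rw [reverse_eval_zero_num, reverse_eval_zero_denom]
  rw [if_neg ha]
  have hCa : (Polynomial.C a⁻¹ : Polynomial ℂ) * Polynomial.C a = 1 := by
    rw [← Polynomial.C_mul, inv_mul_cancel₀ ha, Polynomial.C_1]
  have e1 : f.denom.reverse - Polynomial.C (1 / a) * f.num.reverse
      = Polynomial.C (-a⁻¹) * Polynomial.reflect f.num.natDegree Q := by
    have hrev_denom : f.denom.reverse = Polynomial.reflect f.num.natDegree f.denom := by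
      rw [Polynomial.reverse, h]
    have hrev_num : f.num.reverse = Polynomial.reflect f.num.natDegree f.num := rfl
    have e0 : Polynomial.reflect f.num.natDegree Q
        = f.num.reverse - Polynomial.C a * f.denom.reverse := by
      rw [hQ_def, Polynomial.reflect_sub, Polynomial.reflect_C_mul, hrev_num, hrev_denom]
    rw [e0, one_div, map_neg]
    linear_combination (-(f.denom.reverse) : Polynomial ℂ) * hCa
  rw [e1, rootMultiplicity_C_mul (neg_ne_zero.mpr (inv_ne_zero ha))]
  have e2 : Polynomial.reflect f.num.natDegree Q
      = Polynomial.X ^ (f.num.natDegree - Q.natDegree) * Q.reverse := by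
    have h3 := Polynomial.reflect_mul (f := (1 : Polynomial ℂ)) (g := Q)
      (F := f.num.natDegree - Q.natDegree) (G := Q.natDegree) (by simp) le_rfl
    rw [one_mul, Nat.sub_add_cancel hQm] at h3
    have h4 : Polynomial.reflect (f.num.natDegree - Q.natDegree) (1 : Polynomial ℂ)
        = Polynomial.X ^ (f.num.natDegree - Q.natDegree) := by
      rw [← Polynomial.C_1, Polynomial.reflect_C, Polynomial.C_1, one_mul]
    rw [h3, h4]
    rfl
  rw [e2, rm0_X_pow_mul _ (by rwa [Ne, Polynomial.reverse_eq_zero]),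
    Polynomial.natTrailingDegree_reverse, add_zero]

end Pk

namespace Pk

open Polynomial

lemma fmap_infty (f : RatFunc ℂ) : fmap f ∞ = evalInf f := rfl

lemma fmap_some (f : RatFunc ℂ) (x : ℂ) :
    fmap f (OnePoint.some x) = if f.denom.eval x = 0 then ∞
      else OnePoint.some (f.num.eval x / f.denom.eval x) := rfl

lemma locDeg_some (f : RatFunc ℂ) (x : ℂ) : locDeg f (OnePoint.some x) = locDegFin f x := rfl

lemma sum_rm (P : Polynomial ℂ) (hP : P ≠ 0) :
    ∑ x ∈ P.roots.toFinset, P.rootMultiplicity x = P.natDegree := by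
  have hs : Multiset.card P.roots = P.natDegree :=
    Polynomial.splits_iff_card_roots.mp (IsAlgClosed.splits P)
  rw [← hs, ← Multiset.toFinset_sum_count_eq]
  exact Finset.sum_congr rfl fun x _ => (Polynomial.count_roots P).symm

lemma deg_ne_zero_of_one_le {f : RatFunc ℂ} (hf1 : 1 ≤ deg f) : f ≠ 0 := by
  intro h0
  rw [h0] at hf1
  simp [deg] at hf1

lemma cp1_cases (z : CP1) : z = ∞ ∨ ∃ t : ℂ, z = OnePoint.some t := by
  cases z
  · exact Or.inl rfl
  · exact Or.inr ⟨_, rfl⟩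

lemma key (f : RatFunc ℂ) (hf1 : 1 ≤ deg f) (z : CP1) :
    ∃ h : (fmap f ⁻¹' {z}).Finite,
      (∀ w ∈ h.toFinset, 1 ≤ locDeg f w) ∧ ∑ w ∈ h.toFinset, locDeg f w = deg f := by
  classical
  have hf0 : f ≠ 0 := deg_ne_zero_of_one_le hf1
  have hN : f.num ≠ 0 := RatFunc.num_ne_zero hf0
  have hM : f.denom ≠ 0 := f.denom_ne_zero
  have hMone : f.denom.leadingCoeff = 1 := f.monic_denom
  have hevalInf : evalInf f = if f.denom.natDegree < f.num.natDegree then ∞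
      else OnePoint.some (if f.num.natDegree = f.denom.natDegree
        then f.num.leadingCoeff else 0) := by
    simp only [evalInf, hMone, div_one]
  have pack : ∀ (F : Finset CP1), (∀ w, fmap f w = z ↔ w ∈ F) →
      (∀ w ∈ F, 1 ≤ locDeg f w) → (∑ w ∈ F, locDeg f w = deg f) →
      ∃ h : (fmap f ⁻¹' {z}).Finite,
        (∀ w ∈ h.toFinset, 1 ≤ locDeg f w) ∧ ∑ w ∈ h.toFinset, locDeg f w = deg f := by
    intro F hset hpos hsum
    have hset' : fmap f ⁻¹' {z} = ↑F := by
      ext w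
      simp only [Set.mem_preimage, Set.mem_singleton_iff, Finset.mem_coe]
      exact hset w
    have hfin : (fmap f ⁻¹' {z}).Finite := by rw [hset']; exact F.finite_toSet
    have hFeq : hfin.toFinset = F :=
      Finset.coe_injective (by rw [Set.Finite.coe_toFinset, hset'])
    exact ⟨hfin, by rw [hFeq]; exact hpos, by rw [hFeq]; exact hsum⟩
  rcases cp1_cases z with rfl | ⟨t, rfl⟩
  · -- z = ∞
    refine pack (f.denom.roots.toFinset.image (fun x => (OnePoint.some x : CP1))
      ∪ (if f.denom.natDegree < f.num.natDegree then {∞} else ∅)) ?_ ?_ ?_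
    · intro w
      rcases cp1_cases w with rfl | ⟨x, rfl⟩
      · rw [fmap_infty, hevalInf]
        simp only [Finset.mem_union, Finset.mem_image, Multiset.mem_toFinset]
        constructor
        · intro h
          by_cases hlt : f.denom.natDegree < f.num.natDegree
          · right; simp [hlt]
          · rw [if_neg hlt] at h
            exact absurd h (OnePoint.coe_ne_infty _)
        · intro h
          rcases h with ⟨x, _, hx⟩ | h
          · exact absurd hx (OnePoint.coe_ne_infty _)
          · by_cases hlt : f.denom.natDegree < f.num.natDegree
            · rw [if_pos hlt]
            · simp [hlt] at h
      · rw [fmap_some]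
        simp only [Finset.mem_union, Finset.mem_image, Multiset.mem_toFinset]
        constructor
        · intro h
          by_cases hx : f.denom.eval x = 0
          · exact Or.inl ⟨x, (Polynomial.mem_roots hM).mpr hx, rfl⟩
          · rw [if_neg hx] at h
            exact absurd h (OnePoint.coe_ne_infty _)
        · intro h
          rcases h with ⟨y, hy, hxy⟩ | h
          · have hyx : y = x := OnePoint.coe_injective hxy
            subst hyx
            rw [if_pos (show f.denom.eval _ = 0 from (Polynomial.mem_roots hM).mp hy)]
          · by_cases hlt : f.denom.natDegree < f.num.natDegree <;> simp [hlt] at h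
    · intro w hw
      rcases Finset.mem_union.mp hw with h | h
      · obtain ⟨x, hx, rfl⟩ := Finset.mem_image.mp h
        rw [locDeg_some, locDegFin, if_pos (show f.denom.eval x = 0 from
          (Polynomial.mem_roots hM).mp (Multiset.mem_toFinset.mp hx))]
        exact (Polynomial.rootMultiplicity_pos hM).mpr
          ((Polynomial.mem_roots hM).mp (Multiset.mem_toFinset.mp hx))
      · by_cases hlt : f.denom.natDegree < f.num.natDegree
        · rw [if_pos hlt] at h
          rw [Finset.mem_singleton.mp h, locDeg_inf_of_gt f hf0 hlt]
          omega
        · rw [if_neg hlt] at h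
          exact absurd h (Finset.notMem_empty _)
    · have hdisj : Disjoint (f.denom.roots.toFinset.image (fun x => (OnePoint.some x : CP1)))
          (if f.denom.natDegree < f.num.natDegree then ({∞} : Finset CP1) else ∅) := by
        by_cases hlt : f.denom.natDegree < f.num.natDegree
        · rw [if_pos hlt]
          simp only [Finset.disjoint_singleton_right, Finset.mem_image]
          rintro ⟨x, _, hx⟩
          exact OnePoint.coe_ne_infty _ hx
        · rw [if_neg hlt]; exact Finset.disjoint_empty_right _
      rw [Finset.sum_union hdisj,
        Finset.sum_image (fun a _ b _ h => OnePoint.coe_injective h)]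
      have hsum1 : ∑ x ∈ f.denom.roots.toFinset, locDeg f (OnePoint.some x)
          = f.denom.natDegree := by
        rw [← sum_rm f.denom hM]
        refine Finset.sum_congr rfl fun x hx => ?_
        rw [locDeg_some, locDegFin, if_pos (show f.denom.eval x = 0 from
          (Polynomial.mem_roots hM).mp (Multiset.mem_toFinset.mp hx))]
      rw [hsum1]
      by_cases hlt : f.denom.natDegree < f.num.natDegree
      · rw [if_pos hlt, Finset.sum_singleton, locDeg_inf_of_gt f hf0 hlt, deg]
        omega
      · rw [if_neg hlt, Finset.sum_empty, deg]
        omega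
  · -- z = some t
    set P := f.num - Polynomial.C t * f.denom with hP_def
    have hP : P ≠ 0 := by
      intro h0
      have hdvd : f.denom ∣ f.num := by
        refine ⟨Polynomial.C t, ?_⟩
        have h1 := sub_eq_zero.mp h0
        rw [h1]; ring
      have hu := (f.isCoprime_num_denom).isUnit_of_dvd' hdvd dvd_rfl
      have hn0 : f.denom.natDegree = 0 := Polynomial.natDegree_eq_zero_of_isUnit hu
      have hm0 : f.num.natDegree = 0 := by
        have h1 := sub_eq_zero.mp h0
        rw [h1]
        refine Nat.le_antisymm (le_trans (Polynomial.natDegree_mul_le) ?_) (Nat.zero_le _)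
        simp [hn0]
      rw [deg, hm0, hn0] at hf1
      omega
    have hPle : P.natDegree ≤ max f.num.natDegree f.denom.natDegree := by
      refine le_trans (Polynomial.natDegree_sub_le _ _) ?_
      refine max_le (le_max_left _ _) ?_
      refine le_trans (Polynomial.natDegree_mul_le) ?_
      simp [Polynomial.natDegree_C]
    have hcoeffm : P.coeff f.num.natDegree
        = f.num.leadingCoeff - t * f.denom.coeff f.num.natDegree := by
      rw [hP_def, Polynomial.coeff_sub, Polynomial.coeff_C_mul, Polynomial.leadingCoeff]
    have hPlt : f.num.natDegree = f.denom.natDegree → t = f.num.leadingCoeff →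
        P.natDegree < f.num.natDegree := by
      intro hc ht
      have hle : P.natDegree ≤ f.num.natDegree := le_trans hPle (by omega)
      rcases Nat.lt_or_ge P.natDegree f.num.natDegree with h' | h'
      · exact h'
      · exfalso
        have heq : P.natDegree = f.num.natDegree := le_antisymm hle h'
        have hc0 : P.coeff f.num.natDegree = 0 := by
          rw [hcoeffm, ht]
          have : f.denom.coeff f.num.natDegree = 1 := by
            rw [hc]; exact f.monic_denom.coeff_natDegree
          rw [this, mul_one, sub_self]
        have : P.leadingCoeff = 0 := by rw [Polynomial.leadingCoeff, heq, hc0]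
        exact hP (Polynomial.leadingCoeff_eq_zero.mp this)
    have hmem : ∀ x : ℂ, fmap f (OnePoint.some x) = OnePoint.some t ↔ P.eval x = 0 := by
      intro x
      rw [fmap_some]
      constructor
      · intro h
        by_cases hx : f.denom.eval x = 0
        · rw [if_pos hx] at h
          exact absurd h.symm (OnePoint.coe_ne_infty _)
        · rw [if_neg hx] at h
          have h2 := OnePoint.coe_injective h
          rw [hP_def]
          simp only [Polynomial.eval_sub, Polynomial.eval_mul, Polynomial.eval_C]
          rw [div_eq_iff hx] at h2
          rw [h2]; ring
      · intro h
        have hx : f.denom.eval x ≠ 0 := by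
          intro hx0
          have hnx : f.num.eval x = 0 := by
            rw [hP_def] at h
            simp only [Polynomial.eval_sub, Polynomial.eval_mul, Polynomial.eval_C, hx0,
              mul_zero, sub_zero] at h
            exact h
          exact no_common_root f hnx hx0
        rw [if_neg hx]
        congr 1
        rw [hP_def] at h
        simp only [Polynomial.eval_sub, Polynomial.eval_mul, Polynomial.eval_C] at h
        rw [div_eq_iff hx]
        linear_combination sub_eq_zero.mp h
    have hloc : ∀ x : ℂ, P.eval x = 0 → locDegFin f x = P.rootMultiplicity x := by
      intro x hx
      have hdx : f.denom.eval x ≠ 0 := by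
        intro hx0
        have hnx : f.num.eval x = 0 := by
          rw [hP_def] at hx
          simp only [Polynomial.eval_sub, Polynomial.eval_mul, Polynomial.eval_C, hx0,
            mul_zero, sub_zero] at hx
          exact hx
        exact no_common_root f hnx hx0
      rw [locDegFin, if_neg hdx]
      have hval : f.num.eval x / f.denom.eval x = t := by
        rw [hP_def] at hx
        simp only [Polynomial.eval_sub, Polynomial.eval_mul, Polynomial.eval_C] at hx
        rw [div_eq_iff hdx]
        linear_combination sub_eq_zero.mp hx
      rw [hval]
    refine pack (P.roots.toFinset.image (fun x => (OnePoint.some x : CP1))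
      ∪ (if evalInf f = OnePoint.some t then {∞} else ∅)) ?_ ?_ ?_
    · intro w
      rcases cp1_cases w with rfl | ⟨x, rfl⟩
      · rw [fmap_infty]
        simp only [Finset.mem_union, Finset.mem_image, Multiset.mem_toFinset]
        constructor
        · intro h
          right; simp [h]
        · intro h
          rcases h with ⟨x, _, hx⟩ | h
          · exact absurd hx (OnePoint.coe_ne_infty _)
          · by_cases he : evalInf f = OnePoint.some t
            · exact he
            · simp [he] at h
      · rw [hmem x]
        simp only [Finset.mem_union, Finset.mem_image, Multiset.mem_toFinset]
        constructor
        · intro h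
          exact Or.inl ⟨x, (Polynomial.mem_roots hP).mpr h, rfl⟩
        · intro h
          rcases h with ⟨y, hy, hxy⟩ | h
          · have hyx : y = x := OnePoint.coe_injective hxy
            subst hyx
            exact (Polynomial.mem_roots hP).mp hy
          · by_cases he : evalInf f = OnePoint.some t <;> simp [he] at h
    · intro w hw
      rcases Finset.mem_union.mp hw with h | h
      · obtain ⟨x, hx, rfl⟩ := Finset.mem_image.mp h
        have hrx := (Polynomial.mem_roots hP).mp (Multiset.mem_toFinset.mp hx)
        rw [locDeg_some, hloc x hrx]
        exact (Polynomial.rootMultiplicity_pos hP).mpr hrx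
      · by_cases he : evalInf f = OnePoint.some t
        · rw [if_pos he] at h
          rw [Finset.mem_singleton.mp h]
          rw [hevalInf] at he
          rcases lt_trichotomy f.num.natDegree f.denom.natDegree with hc | hc | hc
          · rw [locDeg_inf_of_lt f hf0 hc]
            omega
          · rw [if_neg (by omega), if_pos hc] at he
            have ht : t = f.num.leadingCoeff := (OnePoint.coe_injective he).symm
            have := hPlt hc ht
            have hunfold2 : (f.num - Polynomial.C t * f.denom).natDegree = P.natDegree := rfl
            rw [locDeg_inf_of_eq f hf0 hf1 hc, ← ht]
            omega
          · rw [if_pos hc] at he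
            exact absurd he (OnePoint.infty_ne_coe t).elim
        · rw [if_neg he] at h
          exact absurd h (Finset.notMem_empty _)
    · have hdisj : Disjoint (P.roots.toFinset.image (fun x => (OnePoint.some x : CP1)))
          (if evalInf f = OnePoint.some t then ({∞} : Finset CP1) else ∅) := by
        by_cases he : evalInf f = OnePoint.some t
        · rw [if_pos he]
          simp only [Finset.disjoint_singleton_right, Finset.mem_image]
          rintro ⟨x, _, hx⟩
          exact OnePoint.coe_ne_infty _ hx
        · rw [if_neg he]; exact Finset.disjoint_empty_right _
      rw [Finset.sum_union hdisj,
        Finset.sum_image (fun a _ b _ h => OnePoint.coe_injective h)]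
      have hsum1 : ∑ x ∈ P.roots.toFinset, locDeg f (OnePoint.some x) = P.natDegree := by
        rw [← sum_rm P hP]
        refine Finset.sum_congr rfl fun x hx => ?_
        rw [locDeg_some, hloc x ((Polynomial.mem_roots hP).mp (Multiset.mem_toFinset.mp hx))]
      rw [hsum1]
      rcases lt_trichotomy f.num.natDegree f.denom.natDegree with hc | hc | hc
      · -- m < n, evalInf f = some 0
        have hev : evalInf f = OnePoint.some 0 := by
          rw [hevalInf, if_neg (by omega), if_neg (by omega)]
        by_cases ht : t = 0
        · subst ht
          rw [if_pos hev, Finset.sum_singleton, locDeg_inf_of_lt f hf0 hc]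
          have hPm : P.natDegree = f.num.natDegree := by
            rw [hP_def]; simp
          rw [hPm, deg]
          omega
        · have hne : evalInf f ≠ OnePoint.some t := by
            rw [hev]
            intro hh
            exact ht (OnePoint.coe_injective hh).symm
          rw [if_neg hne, Finset.sum_empty, add_zero]
          have hPn : P.natDegree = f.denom.natDegree := by
            refine Polynomial.natDegree_eq_of_le_of_coeff_ne_zero
              (le_trans hPle (by omega)) ?_
            rw [hP_def, Polynomial.coeff_sub, Polynomial.coeff_C_mul,
              Polynomial.coeff_eq_zero_of_natDegree_lt hc]
            have : f.denom.coeff f.denom.natDegree = 1 := f.monic_denom.coeff_natDegree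
            rw [this, mul_one, zero_sub]
            simpa using ht
          rw [hPn, deg]
          omega
      · -- m = n
        have ha : f.num.leadingCoeff ≠ 0 := Polynomial.leadingCoeff_ne_zero.mpr hN
        have hev : evalInf f = OnePoint.some f.num.leadingCoeff := by
          rw [hevalInf, if_neg (by omega), if_pos hc]
        by_cases ht : t = f.num.leadingCoeff
        · rw [if_pos (by rw [hev, ht]), Finset.sum_singleton,
            locDeg_inf_of_eq f hf0 hf1 hc]
          have hlt := hPlt hc ht
          have hPP : (f.num - Polynomial.C f.num.leadingCoeff * f.denom) = P := by
            rw [hP_def, ht]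
          have hunfold : (f.num - Polynomial.C t * f.denom).natDegree = P.natDegree := rfl
          rw [hPP, deg]
          omega
        · have hne : evalInf f ≠ OnePoint.some t := by
            rw [hev]
            intro hh
            exact ht ((OnePoint.coe_injective hh)).symm
          rw [if_neg hne, Finset.sum_empty, add_zero]
          have hPn : P.natDegree = f.num.natDegree := by
            refine Polynomial.natDegree_eq_of_le_of_coeff_ne_zero
              (le_trans hPle (by omega)) ?_
            rw [hcoeffm]
            have h1 : f.denom.coeff f.num.natDegree = 1 := by
              rw [hc]; exact f.monic_denom.coeff_natDegree
            rw [h1, mul_one]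
            exact sub_ne_zero.mpr (fun hh => ht hh.symm)
          rw [hPn, deg]
          omega
      · -- n < m, evalInf f = ∞
        have hne : evalInf f ≠ OnePoint.some t := by
          rw [hevalInf, if_pos hc]
          exact (OnePoint.infty_ne_coe t)
        rw [if_neg hne, Finset.sum_empty, add_zero]
        have hPn : P.natDegree = f.num.natDegree := by
          refine Polynomial.natDegree_eq_of_le_of_coeff_ne_zero
            (le_trans hPle (by omega)) ?_
          rw [hcoeffm, Polynomial.coeff_eq_zero_of_natDegree_lt hc, mul_zero, sub_zero]
          exact Polynomial.leadingCoeff_ne_zero.mpr hN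
        rw [hPn, deg]
        omega

end Pk



open Pk in
/-- Let `O` be an orbifold with `χ(O) > 0` and `D` a rational function
of degree at least two such that `D : O → O` is a minimal holomorphic map. If
`deg D ≠ 2`, then `c(O) ⊆ c(O₂^D)`: every point with `ν(z) > 1` is a critical value
of `D`. -/
theorem statement11 (O : Orbifold) (hχ : 0 < chiNu O.nu)
    (D : RatFunc ℂ) (hD : 2 ≤ deg D) (hmin : IsMinHoloBetween D O.nu O.nu)
    (hne : deg D ≠ 2) :
    ∀ z : CP1, 1 < O.nu z → 1 < nu2 D z := by
  classical
  intro z₀ hz₀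
  by_contra hcon
  push_neg at hcon
  have hd1 : 1 ≤ deg D := by omega
  obtain ⟨hfin, hpos, hsum⟩ := key D hd1 z₀
  set S := O.finite.toFinset with hS_def
  have hnu2 : nu2 D z₀ = hfin.toFinset.lcm (locDeg D) := by
    rw [nu2, dif_pos hfin]
  have hlcm_ne : hfin.toFinset.lcm (locDeg D) ≠ 0 := by
    intro h0
    rw [Finset.lcm_eq_zero_iff] at h0
    obtain ⟨w, hw, hw0⟩ := h0
    have := hpos w hw
    omega
  have hlcm_one : hfin.toFinset.lcm (locDeg D) = 1 := by
    rw [hnu2] at hcon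
    omega
  have hone : ∀ w ∈ hfin.toFinset, locDeg D w = 1 := by
    intro w hw
    have hdvd : locDeg D w ∣ hfin.toFinset.lcm (locDeg D) := Finset.dvd_lcm hw
    rw [hlcm_one] at hdvd
    exact Nat.dvd_one.mp hdvd
  have hfiber_S : ∀ w ∈ hfin.toFinset, O.nu w = O.nu z₀ ∧ w ∈ S := by
    intro w hw
    have hw' : fmap D w = z₀ := by
      have := (Set.Finite.mem_toFinset hfin).mp hw
      simpa using this
    have hm := hmin w
    rw [hw', hone w hw, Nat.gcd_one_left, mul_one] at hm
    refine ⟨hm.symm, ?_⟩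
    rw [hS_def, Set.Finite.mem_toFinset]
    show O.nu w ≠ 1
    omega
  have hsub : hfin.toFinset ⊆ S := fun w hw => (hfiber_S w hw).2
  have hcard : hfin.toFinset.card = deg D := by
    rw [← hsum]
    rw [Finset.sum_congr rfl hone, Finset.sum_const, smul_eq_mul, mul_one]
  have hcardS : S.card ≤ 3 := by
    have hχ' := hχ
    rw [chiNu, dif_pos O.finite] at hχ'
    have hbound : ∀ z ∈ S, ((O.nu z : ℚ)⁻¹ - 1) ≤ -(1/2) := by
      intro z hz
      have hz1 : O.nu z ≠ 1 := by
        rw [hS_def, Set.Finite.mem_toFinset] at hz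
        exact hz
      have hz2 : 2 ≤ O.nu z := by have := O.one_le z; omega
      have hq : (2:ℚ) ≤ (O.nu z : ℚ) := by exact_mod_cast hz2
      have hinv : (O.nu z : ℚ)⁻¹ ≤ 2⁻¹ := by
        apply inv_anti₀ (by norm_num) hq
      linarith
    have hsb := Finset.sum_le_card_nsmul S _ _ hbound
    rw [nsmul_eq_mul] at hsb
    have h4 : (S.card : ℚ) < 4 := by linarith
    have h4' : S.card < 4 := by exact_mod_cast h4
    omega
  have hd3 : deg D = 3 := by
    have h1 : hfin.toFinset.card ≤ S.card := Finset.card_le_card hsub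
    omega
  have hSFeq : hfin.toFinset = S := by
    apply Finset.eq_of_subset_of_card_le hsub
    omega
  have hcS : S.card = 3 := by
    rw [← hSFeq]
    omega
  have hallν : ∀ z ∈ S, O.nu z = O.nu z₀ := by
    intro z hz
    exact (hfiber_S z (by rw [hSFeq]; exact hz)).1
  have hν2 : O.nu z₀ = 2 := by
    rw [chiNu, dif_pos O.finite] at hχ
    have hsumν : ∑ z ∈ O.finite.toFinset, ((O.nu z : ℚ)⁻¹ - 1)
        = 3 * ((O.nu z₀ : ℚ)⁻¹ - 1) := by
      rw [Finset.sum_congr rfl (fun z hz => by rw [hallν z hz])]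
      rw [Finset.sum_const, hcS, nsmul_eq_mul]
      norm_num
    rw [hsumν] at hχ
    have hge : 2 ≤ O.nu z₀ := hz₀
    have hgeq : (2:ℚ) ≤ (O.nu z₀ : ℚ) := by exact_mod_cast hge
    have hpos0 : (0:ℚ) < (O.nu z₀ : ℚ) := by linarith
    have hinv : (1:ℚ)/3 < (O.nu z₀ : ℚ)⁻¹ := by linarith
    have hmul := mul_lt_mul_of_pos_left hinv hpos0
    rw [mul_inv_cancel₀ (ne_of_gt hpos0)] at hmul
    have hlt3 : (O.nu z₀ : ℚ) < 3 := by linarith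
    have : O.nu z₀ < 3 := by exact_mod_cast hlt3
    omega
  have hz₀S : z₀ ∈ S := by
    rw [hS_def, Set.Finite.mem_toFinset]
    show O.nu z₀ ≠ 1
    omega
  have herase : (S.erase z₀).Nonempty := by
    rw [← Finset.card_pos, Finset.card_erase_of_mem hz₀S, hcS]
    omega
  obtain ⟨a, ha⟩ := herase
  have haS : a ∈ S := Finset.mem_of_mem_erase ha
  have hane : a ≠ z₀ := Finset.ne_of_mem_erase ha
  have hνa : O.nu a = 2 := by rw [hallν a haS, hν2]
  obtain ⟨hfa, hposa, hsuma⟩ := key D hd1 a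
  have heven : ∀ w ∈ hfa.toFinset, 2 ∣ locDeg D w := by
    intro w hw
    have hw' : fmap D w = a := by
      have := (Set.Finite.mem_toFinset hfa).mp hw
      simpa using this
    have hwnS : w ∉ S := by
      intro hwS
      have hwz : fmap D w = z₀ := by
        have hw2 : w ∈ hfin.toFinset := by rw [hSFeq]; exact hwS
        have := (Set.Finite.mem_toFinset hfin).mp hw2
        simpa using this
      rw [hw'] at hwz
      exact hane hwz
    have hν1 : O.nu w = 1 := by
      by_contra hne1
      exact hwnS (by rw [hS_def, Set.Finite.mem_toFinset]; exact hne1)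
    have hm := hmin w
    rw [hw', hν1, one_mul, hνa] at hm
    rw [hm]
    exact Nat.gcd_dvd_left _ _
  have h2dvd : 2 ∣ ∑ w ∈ hfa.toFinset, locDeg D w := Finset.dvd_sum heven
  rw [hsuma, hd3] at h2dvd
  omega
end
end
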